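/- Assume αχ(M) ≤ 0, that p ∈ ln Ω with Σ_{i=1}^N p_i = 0 corresponds to a constant α-curvature metric (K_i = s_α r_i^α for all i at p), and let F̃ : ℝ^N → ℝ be any convex C¹ function with ∂F̃/∂u_i = K̃_i − s_α r_i^α on ℝ^N. Then F̃ is proper on the hyperplane 𝒰 = {u ∈ ℝ^N : Σ_{i=1}^N u_i = 0}: F̃(u) → +∞ as ‖u‖ → ∞ with u ∈ 𝒰. -/

import Mathlib

open Real Filter Topology

namespace IDCP

variable {N : ℕ}

/-- The set of edges: 2-element subsets of vertices contained in some face. -/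
def edges (Fc : Finset (Finset (Fin N))) : Finset (Finset (Fin N)) :=
  Fc.biUnion fun f => f.powersetCard 2

/-- `Fc` is the face set of a triangulation of a closed connected surface:
every face has 3 vertices, every edge lies in exactly two faces, and the
1-skeleton is connected. -/
structure IsTriangulation (Fc : Finset (Finset (Fin N))) : Prop where
  card3 : ∀ f ∈ Fc, f.card = 3
  edge2 : ∀ e ∈ edges Fc, (Fc.filter fun f => e ⊆ f).card = 2
  conn : (SimpleGraph.fromRel fun i j => ({i, j} : Finset (Fin N)) ∈ edges Fc).Connected

/-- Euler characteristic χ(M) = N − |E| + |F|. -/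
def chi (Fc : Finset (Finset (Fin N))) : ℤ :=
  (N : ℤ) - ((edges Fc).card : ℤ) + (Fc.card : ℤ)

/-- Edge length l_ij = √(r_i² + r_j² + 2 r_i r_j I_{ij}). -/
noncomputable def len (I : Finset (Fin N) → ℝ) (r : Fin N → ℝ) (i j : Fin N) : ℝ :=
  Real.sqrt (r i ^ 2 + r j ^ 2 + 2 * r i * r j * I {i, j})

/-- The cosine of the inner angle at `i` in triangle `{i,j,k}`. -/
noncomputable def cosAng (I : Finset (Fin N) → ℝ) (r : Fin N → ℝ) (i j k : Fin N) : ℝ :=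
  (len I r i j ^ 2 + len I r i k ^ 2 - len I r j k ^ 2) / (2 * len I r i j * len I r i k)

/-- The auxiliary function Λ. -/
noncomputable def Lam (x : ℝ) : ℝ :=
  if x ≤ -1 then π else if x ≤ 1 then Real.arccos x else 0

/-- Discrete Gaussian curvature K_i = 2π − Σ_{{i,j,k}∈F} θ_i^{jk}.  Every face
containing `i` appears exactly twice (once for each ordering of `j,k`), whence
the factor 1/2. -/
noncomputable def K (Fc : Finset (Finset (Fin N))) (I : Finset (Fin N) → ℝ)
    (r : Fin N → ℝ) (i : Fin N) : ℝ :=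
  2 * π - (1 / 2) * ∑ j, ∑ k,
    (if ({i, j, k} : Finset (Fin N)) ∈ Fc then Real.arccos (cosAng I r i j k) else 0)

/-- Extended curvature K̃_i = 2π − Σ θ̃_i^{jk}, using the generalized angles Λ. -/
noncomputable def Kt (Fc : Finset (Finset (Fin N))) (I : Finset (Fin N) → ℝ)
    (r : Fin N → ℝ) (i : Fin N) : ℝ :=
  2 * π - (1 / 2) * ∑ j, ∑ k,
    (if ({i, j, k} : Finset (Fin N)) ∈ Fc then Lam (cosAng I r i j k) else 0)

/-- The set Ω of inversive distance circle packing metrics. -/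
def Omega (Fc : Finset (Finset (Fin N))) (I : Finset (Fin N) → ℝ) : Set (Fin N → ℝ) :=
  {r | (∀ i, 0 < r i) ∧ ∀ i j k : Fin N, ({i, j, k} : Finset (Fin N)) ∈ Fc →
    len I r j k < len I r i j + len I r i k}

/-- s_α = 2πχ(M)/‖r‖_α^α. -/
noncomputable def sA (Fc : Finset (Finset (Fin N))) (α : ℝ) (r : Fin N → ℝ) : ℝ :=
  2 * π * (chi Fc : ℝ) / ∑ j, r j ^ α

/-- Back from u-coordinates: r_i = e^{u_i}. -/
noncomputable def rOf (u : Fin N → ℝ) : Fin N → ℝ := fun i => Real.exp (u i)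

/-- ln Ω, the image of Ω under the coordinate change r ↦ u, u_i = ln r_i. -/
def lnOmega (Fc : Finset (Finset (Fin N))) (I : Finset (Fin N) → ℝ) : Set (Fin N → ℝ) :=
  {u | rOf u ∈ Omega Fc I}

/-- `u` solves the α-flow du_i/dt = s_α r_i^α − K_i on the time set `D`,
staying in ln Ω. -/
def IsFlowSol (Fc : Finset (Finset (Fin N))) (I : Finset (Fin N) → ℝ) (α : ℝ)
    (D : Set ℝ) (u : ℝ → Fin N → ℝ) : Prop :=
  ∀ t ∈ D, rOf (u t) ∈ Omega Fc I ∧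
    ∀ i, HasDerivWithinAt (fun s => u s i)
      (sA Fc α (rOf (u t)) * rOf (u t) i ^ α - K Fc I (rOf (u t)) i) D t

/-- `u` solves the extended α-flow du_i/dt = s_α r_i^α − K̃_i on the time set `D`. -/
def IsExtFlowSol (Fc : Finset (Finset (Fin N))) (I : Finset (Fin N) → ℝ) (α : ℝ)
    (D : Set ℝ) (u : ℝ → Fin N → ℝ) : Prop :=
  ∀ t ∈ D, ∀ i, HasDerivWithinAt (fun s => u s i)
      (sA Fc α (rOf (u t)) * rOf (u t) i ^ α - Kt Fc I (rOf (u t)) i) D t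

/-- Lk(A): pairs (e,v) with both endpoints of e outside A, v ∈ A, and e,v spanning a face. -/
def Lk (Fc : Finset (Finset (Fin N))) (A : Finset (Fin N)) :
    Finset (Finset (Fin N) × Fin N) :=
  ((edges Fc) ×ˢ (Finset.univ : Finset (Fin N))).filter fun p =>
    (∀ x ∈ p.1, x ∉ A) ∧ p.2 ∈ A ∧ insert p.2 p.1 ∈ Fc

/-- Euler characteristic χ(F_A) of the subcomplex spanned by A. -/
def chiSub (Fc : Finset (Finset (Fin N))) (A : Finset (Fin N)) : ℤ :=
  (A.card : ℤ) - (((edges Fc).filter (fun e => e ⊆ A)).card : ℤ)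
    + ((Fc.filter (fun f => f ⊆ A)).card : ℤ)

/-- The lower bound −Σ_{(e,v)∈Lk(A)}(π − Λ(I_e)) + 2πχ(F_A) defining Y_A. -/
noncomputable def Ybound (Fc : Finset (Finset (Fin N))) (I : Finset (Fin N) → ℝ)
    (A : Finset (Fin N)) : ℝ :=
  -(∑ p ∈ Lk Fc A, (π - Lam (I p.1))) + 2 * π * (chiSub Fc A : ℝ)

/-- x ∈ Y. -/
noncomputable def memY (Fc : Finset (Finset (Fin N))) (I : Finset (Fin N) → ℝ)
    (x : Fin N → ℝ) : Prop :=
  (∑ i, x i) = 2 * π * (chi Fc : ℝ) ∧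
    ∀ A : Finset (Fin N), A.Nonempty → A ≠ Finset.univ → Ybound Fc I A < ∑ i ∈ A, x i

/-- x ∈ Ȳ. -/
noncomputable def memYbar (Fc : Finset (Finset (Fin N))) (I : Finset (Fin N) → ℝ)
    (x : Fin N → ℝ) : Prop :=
  (∑ i, x i) = 2 * π * (chi Fc : ℝ) ∧
    ∀ A : Finset (Fin N), A.Nonempty → A ≠ Finset.univ → Ybound Fc I A ≤ ∑ i ∈ A, x i

/-- The gradient of the extended α-potential: G(u)_i = K̃_i(r) − s_α(r) r_i^α,
with r = e^u. -/
noncomputable def extGrad (Fc : Finset (Finset (Fin N))) (I : Finset (Fin N) → ℝ)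
    (α : ℝ) (u : Fin N → ℝ) (i : Fin N) : ℝ :=
  Kt Fc I (rOf u) i - sA Fc α (rOf u) * rOf u i ^ α

section Aux
open Finset in
lemma Lam_eq' (x : ℝ) : Lam x = Real.arccos (max (-1) (min 1 x)) := by
  unfold Lam
  rcases le_or_gt x (-1) with h | h
  · rw [if_pos h, min_eq_right (h.trans (by norm_num)), max_eq_left h, Real.arccos_neg_one]
  · rw [if_neg (not_le.2 h)]
    rcases le_or_gt x 1 with h2 | h2
    · rw [if_pos h2, min_eq_right h2, max_eq_right h.le]
    · rw [if_neg (not_le.2 h2), min_eq_left h2.le, max_eq_right (by norm_num : (-1:ℝ) ≤ 1),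
        Real.arccos_one]

lemma continuous_Lam : Continuous Lam := by
  simp only [funext Lam_eq']
  exact Real.continuous_arccos.comp (continuous_const.max (continuous_const.min continuous_id))

lemma Lam_neg' (x : ℝ) : Lam (-x) = π - Lam x := by
  rw [Lam_eq', Lam_eq', show max (-1) (min 1 (-x)) = - max (-1) (min 1 x) by
    simp only [min_def, max_def]; split_ifs <;> linarith, Real.arccos_neg]

lemma Lam_of_mem (x : ℝ) (h1 : -1 ≤ x) (h2 : x ≤ 1) : Lam x = Real.arccos x := by
  rw [Lam_eq', min_eq_right h2, max_eq_right h1]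

lemma Lam_nonneg (x : ℝ) : 0 ≤ Lam x := by rw [Lam_eq']; exact Real.arccos_nonneg _

lemma Lam_le_pi (x : ℝ) : Lam x ≤ π := by rw [Lam_eq']; exact Real.arccos_le_pi _

lemma arccos_lt_pi' {x : ℝ} (h : -1 < x) : Real.arccos x < π :=
  lt_of_le_of_ne (Real.arccos_le_pi x) (fun he => by
    rw [Real.arccos_eq_pi] at he; linarith)

variable {N : ℕ} {Fc : Finset (Finset (Fin N))} {I : Finset (Fin N) → ℝ} {r : Fin N → ℝ}
variable {i j k : Fin N}

lemma len_comm : len I r i j = len I r j i := by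
  unfold len; rw [Finset.pair_comm]; ring_nf

lemma len_sq (h : 0 ≤ I {i, j}) (hri : 0 < r i) (hrj : 0 < r j) :
    len I r i j ^ 2 = r i ^ 2 + r j ^ 2 + 2 * r i * r j * I {i, j} :=
  Real.sq_sqrt (by nlinarith [mul_nonneg (mul_nonneg (mul_nonneg (by norm_num : (0:ℝ) ≤ 2) hri.le) hrj.le) h])

lemma len_pos (h : 0 ≤ I {i, j}) (hri : 0 < r i) (hrj : 0 < r j) :
    0 < len I r i j :=
  Real.sqrt_pos.2 (by nlinarith [mul_nonneg (mul_nonneg (mul_nonneg (by norm_num : (0:ℝ) ≤ 2) hri.le) hrj.le) h])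

lemma cosAng_symm : cosAng I r i j k = cosAng I r i k j := by
  unfold cosAng; rw [len_comm (i := k) (j := j)]; ring_nf

/-- triple set rewriting helpers -/
lemma triple_comm12 : ({i, j, k} : Finset (Fin N)) = {j, i, k} := by
  rw [Finset.insert_comm]
lemma triple_comm23 : ({i, j, k} : Finset (Fin N)) = {i, k, j} := by
  rw [Finset.pair_comm]
lemma triple_rot : ({i, j, k} : Finset (Fin N)) = {k, i, j} := by
  rw [Finset.pair_comm j k, Finset.insert_comm i k]

lemma face_distinct (hcard : ({i, j, k} : Finset (Fin N)).card = 3) :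
    i ≠ j ∧ i ≠ k ∧ j ≠ k := by
  have hle : ∀ a b : Fin N, ({a, b} : Finset (Fin N)).card ≤ 2 :=
    fun a b => (Finset.card_insert_le _ _).trans (by simp)
  refine ⟨?_, ?_, ?_⟩ <;> rintro rfl
  · have he : ({i, i, k} : Finset (Fin N)) = {i, k} := by ext x; simp
    rw [he] at hcard; linarith [hle i k]
  · have he : ({i, j, i} : Finset (Fin N)) = {i, j} := by ext x; simp [or_comm]
    rw [he] at hcard; linarith [hle i j]
  · have he : ({i, j, j} : Finset (Fin N)) = {i, j} := by ext x; simp [or_comm]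
    rw [he] at hcard; linarith [hle i j]

end Aux
variable {N : ℕ} {Fc : Finset (Finset (Fin N))} {I : Finset (Fin N) → ℝ} {r : Fin N → ℝ}
variable {i j k : Fin N}

lemma pair_mem_edges {f : Finset (Fin N)} (hf : f ∈ Fc) (hij : i ≠ j)
    (hsub : ({i, j} : Finset (Fin N)) ⊆ f) : ({i, j} : Finset (Fin N)) ∈ edges Fc :=
  Finset.mem_biUnion.2 ⟨f, hf, Finset.mem_powersetCard.2 ⟨hsub, Finset.card_pair hij⟩⟩

lemma face_edges (h3 : ∀ f ∈ Fc, f.card = 3) (hf : ({i, j, k} : Finset (Fin N)) ∈ Fc) :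
    ({i, j} : Finset (Fin N)) ∈ edges Fc ∧ ({i, k} : Finset (Fin N)) ∈ edges Fc ∧
      ({j, k} : Finset (Fin N)) ∈ edges Fc := by
  obtain ⟨hij, hik, hjk⟩ := face_distinct (h3 _ hf)
  refine ⟨pair_mem_edges hf hij ?_, pair_mem_edges hf hik ?_, pair_mem_edges hf hjk ?_⟩ <;>
    intro x hx <;> simp at hx ⊢ <;> tauto

/-- Positivity of the three edge lengths and the three strict triangle
inequalities, for a face of a metric in `Ω`. -/
lemma face_geom (h3 : ∀ f ∈ Fc, f.card = 3) (hI : ∀ e ∈ edges Fc, 0 ≤ I e)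
    (hr : r ∈ Omega Fc I) (hf : ({i, j, k} : Finset (Fin N)) ∈ Fc) :
    0 < len I r i j ∧ 0 < len I r i k ∧ 0 < len I r j k ∧
      len I r j k < len I r i j + len I r i k ∧
      len I r i j < len I r i k + len I r j k ∧
      len I r i k < len I r i j + len I r j k := by
  obtain ⟨e1, e2, e3⟩ := face_edges h3 hf
  have hIij := hI _ e1
  have hIik := hI _ e2
  have hIjk := hI _ e3
  have h1 : 0 < len I r i j := len_pos hIij (hr.1 i) (hr.1 j)
  have h2 : 0 < len I r i k := len_pos hIik (hr.1 i) (hr.1 k)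
  have h3' : 0 < len I r j k := len_pos hIjk (hr.1 j) (hr.1 k)
  have t1 := hr.2 i j k hf
  have t2 := hr.2 k i j (by rw [← triple_rot]; exact hf)
  have t3 := hr.2 j i k (by rw [← triple_comm12]; exact hf)
  rw [len_comm (i := k) (j := i)] at t2
  rw [len_comm (i := k) (j := j)] at t2
  rw [len_comm (i := j) (j := i)] at t3
  exact ⟨h1, h2, h3', t1, t2, t3⟩

lemma cosAng_bounds (h3 : ∀ f ∈ Fc, f.card = 3) (hI : ∀ e ∈ edges Fc, 0 ≤ I e)
    (hr : r ∈ Omega Fc I) (hf : ({i, j, k} : Finset (Fin N)) ∈ Fc) :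
    -1 < cosAng I r i j k ∧ cosAng I r i j k < 1 := by
  obtain ⟨hX, hY, hZ, t1, t2, t3⟩ := face_geom h3 hI hr hf
  set X := len I r i j
  set Y := len I r i k
  set Z := len I r j k
  have hd : (0:ℝ) < 2 * X * Y := by positivity
  unfold cosAng
  constructor
  · rw [lt_div_iff₀ hd]
    nlinarith [mul_pos (show (0:ℝ) < X + Y + Z by linarith) (show (0:ℝ) < X + Y - Z by linarith)]
  · rw [div_lt_iff₀ hd]
    nlinarith [mul_pos (show (0:ℝ) < Z + X - Y by linarith) (show (0:ℝ) < Z - X + Y by linarith)]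

lemma cos_sum_pos {X Y Z : ℝ} (hX : 0 < X) (hY : 0 < Y) (hZ : 0 < Z)
    (t2 : X < Y + Z) (t3 : Y < X + Z) (t1 : Z < X + Y) :
    0 < (X^2 + Y^2 - Z^2) / (2*X*Y) + (X^2 + Z^2 - Y^2) / (2*X*Z) := by
  have he : (X^2 + Y^2 - Z^2) / (2*X*Y) + (X^2 + Z^2 - Y^2) / (2*X*Z)
      = (Y + Z) * ((X + Y - Z) * (X - Y + Z)) / (2*X*Y*Z) := by
    field_simp; ring
  rw [he]
  exact div_pos (mul_pos (by linarith) (mul_pos (by linarith) (by linarith))) (by positivity)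

lemma Lam_cosAng_pair_lt_pi (h3 : ∀ f ∈ Fc, f.card = 3) (hI : ∀ e ∈ edges Fc, 0 ≤ I e)
    (hr : r ∈ Omega Fc I) (hf : ({i, j, k} : Finset (Fin N)) ∈ Fc) :
    Lam (cosAng I r i j k) + Lam (cosAng I r j i k) < π := by
  obtain ⟨hX, hY, hZ, t1, t2, t3⟩ := face_geom h3 hI hr hf
  have hf' : ({j, i, k} : Finset (Fin N)) ∈ Fc := by rw [← triple_comm12]; exact hf
  obtain ⟨ha1, ha2⟩ := cosAng_bounds h3 hI hr hf
  obtain ⟨hb1, hb2⟩ := cosAng_bounds h3 hI hr hf'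
  have hb' : cosAng I r j i k = ((len I r i j)^2 + (len I r j k)^2 - (len I r i k)^2)
      / (2*(len I r i j)*(len I r j k)) := by
    unfold cosAng; rw [len_comm (i := j) (j := i)]
  have hab : 0 < cosAng I r i j k + cosAng I r j i k := by
    rw [hb', show cosAng I r i j k = ((len I r i j)^2 + (len I r i k)^2 - (len I r j k)^2)
      / (2*(len I r i j)*(len I r i k)) from rfl]
    exact cos_sum_pos hX hY hZ t2 t3 t1
  have h1 : Real.arccos (cosAng I r i j k) < Real.arccos (-(cosAng I r j i k)) :=
    Real.strictAntiOn_arccos (Set.mem_Icc.2 ⟨by linarith, by linarith⟩)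
      (Set.mem_Icc.2 ⟨ha1.le, ha2.le⟩) (by linarith)
  rw [Real.arccos_neg] at h1
  rw [Lam_of_mem _ ha1.le ha2.le, Lam_of_mem _ hb1.le hb2.le]
  linarith

lemma Lam_cosAng_lt_pi_sub (h3 : ∀ f ∈ Fc, f.card = 3) (hI : ∀ e ∈ edges Fc, 0 ≤ I e)
    (hr : r ∈ Omega Fc I) (hf : ({i, j, k} : Finset (Fin N)) ∈ Fc) :
    Lam (cosAng I r i j k) < π - Lam (I {j, k}) := by
  obtain ⟨hX, hY, hZ, t1, t2, t3⟩ := face_geom h3 hI hr hf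
  obtain ⟨ha1, ha2⟩ := cosAng_bounds h3 hI hr hf
  obtain ⟨e1, e2, e3⟩ := face_edges h3 hf
  have hIij := hI _ e1
  have hIik := hI _ e2
  have hIjk := hI _ e3
  have hri := hr.1 i
  have hrj := hr.1 j
  have hrk := hr.1 k
  rw [Lam_of_mem _ ha1.le ha2.le]
  rcases le_or_gt 1 (I {j, k}) with hc | hc
  · rw [show Lam (I {j, k}) = 0 by
      rw [Lam_eq', min_eq_left hc, max_eq_right (by norm_num : (-1:ℝ) ≤ 1), Real.arccos_one]]
    rw [sub_zero]
    exact arccos_lt_pi' ha1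
  · rw [Lam_of_mem _ (by linarith) hc.le, ← Real.arccos_neg]
    apply Real.strictAntiOn_arccos (Set.mem_Icc.2 ⟨by linarith, by linarith⟩)
      (Set.mem_Icc.2 ⟨ha1.le, ha2.le⟩)
    -- key algebraic inequality : -I_jk < cosAng
    set X := len I r i j
    set Y := len I r i k
    have hsX : X ^ 2 = r i ^ 2 + r j ^ 2 + 2 * r i * r j * I {i, j} := len_sq hIij hri hrj
    have hsY : Y ^ 2 = r i ^ 2 + r k ^ 2 + 2 * r i * r k * I {i, k} := len_sq hIik hri hrk
    have hsZ : len I r j k ^ 2 = r j ^ 2 + r k ^ 2 + 2 * r j * r k * I {j, k} :=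
      len_sq hIjk hrj hrk
    have hXY : r i ^ 2 + r j * r k ≤ X * Y := by
      have hsq : (r i ^ 2 + r j * r k) ^ 2 ≤ (X * Y) ^ 2 := by
        rw [mul_pow, hsX, hsY]
        nlinarith [sq_nonneg (r j - r k), sq_nonneg (r i),
          mul_nonneg (mul_nonneg (mul_nonneg (by norm_num : (0:ℝ) ≤ 2) hri.le) hrj.le) hIij,
          mul_nonneg (mul_nonneg (mul_nonneg (by norm_num : (0:ℝ) ≤ 2) hri.le) hrk.le) hIik,
          mul_pos hri hrj, mul_pos hri hrk, mul_pos hrj hrk, sq_nonneg (r j * r k)]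
      calc r i ^ 2 + r j * r k = √((r i ^ 2 + r j * r k) ^ 2) :=
            (Real.sqrt_sq (by positivity)).symm
        _ ≤ √((X * Y) ^ 2) := Real.sqrt_le_sqrt hsq
        _ = X * Y := Real.sqrt_sq (by positivity)
    unfold cosAng
    rw [lt_div_iff₀ (by positivity : (0:ℝ) < 2 * X * Y)]
    have hIXY : I {j, k} * (r i ^ 2 + r j * r k) ≤ I {j, k} * (X * Y) :=
      mul_le_mul_of_nonneg_left hXY hIjk
    nlinarith [mul_pos hri hrj, mul_pos hri hrk, mul_pos hri hri,
      mul_nonneg (mul_nonneg hri.le hrj.le) hIij, mul_nonneg (mul_nonneg hri.le hrk.le) hIik]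

lemma Kt_eq_K (h3 : ∀ f ∈ Fc, f.card = 3) (hI : ∀ e ∈ edges Fc, 0 ≤ I e)
    (hr : r ∈ Omega Fc I) : Kt Fc I r i = K Fc I r i := by
  unfold Kt K
  congr 2
  refine Finset.sum_congr rfl fun j _ => Finset.sum_congr rfl fun k _ => ?_
  split_ifs with h
  · obtain ⟨h1, h2⟩ := cosAng_bounds h3 hI hr h
    exact Lam_of_mem _ h1.le h2.le
  · rfl
lemma len_scale {c : ℝ} (hc : 0 ≤ c) {r' : Fin N → ℝ}
    (hi : r' i = c * r i) (hj : r' j = c * r j) : len I r' i j = c * len I r i j := by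
  unfold len
  rw [hi, hj, show (c*r i)^2 + (c*r j)^2 + 2*(c*r i)*(c*r j)*I {i, j}
    = c^2 * (r i^2 + r j^2 + 2*r i*r j*I {i, j}) by ring,
    Real.sqrt_mul (sq_nonneg c), Real.sqrt_sq hc]

lemma cosAng_scale {c : ℝ} (hc : 0 < c) {r' : Fin N → ℝ}
    (hi : r' i = c * r i) (hj : r' j = c * r j) (hk : r' k = c * r k) :
    cosAng I r' i j k = cosAng I r i j k := by
  unfold cosAng
  rw [len_scale hc.le hi hj, len_scale hc.le hi hk, len_scale hc.le hj hk,
    show (c * len I r i j)^2 + (c * len I r i k)^2 - (c * len I r j k)^2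
      = c^2 * ((len I r i j)^2 + (len I r i k)^2 - (len I r j k)^2) by ring,
    show 2 * (c * len I r i j) * (c * len I r i k)
      = c^2 * (2 * len I r i j * len I r i k) by ring,
    mul_div_mul_left _ _ (by positivity : c^2 ≠ 0)]

/-- The normalized form of `cosAng`, dividing through by `r j * r k`. -/
lemma cosAng_norm (hIij : 0 ≤ I {i, j}) (hIik : 0 ≤ I {i, k}) (hIjk : 0 ≤ I {j, k})
    (hri : 0 < r i) (hrj : 0 < r j) (hrk : 0 < r k) :
    cosAng I r i j k =
      (2*(r i/r j)*(r i/r k) + 2*I {i, j}*(r i/r k) + 2*I {i, k}*(r i/r j) - 2*I {j, k})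
      / (2 * Real.sqrt ((r i/r j)^2 + 1 + 2*I {i, j}*(r i/r j))
          * Real.sqrt ((r i/r k)^2 + 1 + 2*I {i, k}*(r i/r k))) := by
  have hsqj : Real.sqrt ((r i/r j)^2 + 1 + 2*I {i, j}*(r i/r j)) = len I r i j / r j := by
    rw [show (r i/r j)^2 + 1 + 2*I {i, j}*(r i/r j)
      = (r i^2 + r j^2 + 2*r i*r j*I {i, j}) / r j^2 by field_simp,
      Real.sqrt_div (by nlinarith [mul_nonneg (mul_nonneg (mul_nonneg (by norm_num : (0:ℝ) ≤ 2) hri.le) hrj.le) hIij]),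
      Real.sqrt_sq hrj.le]
    rfl
  have hsqk : Real.sqrt ((r i/r k)^2 + 1 + 2*I {i, k}*(r i/r k)) = len I r i k / r k := by
    rw [show (r i/r k)^2 + 1 + 2*I {i, k}*(r i/r k)
      = (r i^2 + r k^2 + 2*r i*r k*I {i, k}) / r k^2 by field_simp,
      Real.sqrt_div (by nlinarith [mul_nonneg (mul_nonneg (mul_nonneg (by norm_num : (0:ℝ) ≤ 2) hri.le) hrk.le) hIik]),
      Real.sqrt_sq hrk.le]
    rfl
  rw [hsqj, hsqk]
  have hlij := len_pos hIij hri hrj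
  have hlik := len_pos hIik hri hrk
  have hnum : (len I r i j)^2 + (len I r i k)^2 - (len I r j k)^2
      = r j * r k * (2*(r i/r j)*(r i/r k) + 2*I {i, j}*(r i/r k) + 2*I {i, k}*(r i/r j)
        - 2*I {j, k}) := by
    rw [len_sq hIij hri hrj, len_sq hIik hri hrk, len_sq hIjk hrj hrk]
    field_simp
    ring
  show (len I r i j^2 + len I r i k^2 - len I r j k^2) / (2 * len I r i j * len I r i k) = _
  rw [hnum, show 2 * (len I r i j / r j) * (len I r i k / r k)
    = (r j * r k)⁻¹ * (2 * len I r i j * len I r i k) by field_simp]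
  rw [div_eq_div_iff (by positivity) (by positivity)]
  field_simp

lemma tendsto_exp_ratio {a b c d : ℝ} (h : c < d) :
    Filter.Tendsto (fun t : ℝ => Real.exp (a + t*c) / Real.exp (b + t*d))
      Filter.atTop (nhds 0) := by
  have he : ∀ t : ℝ, Real.exp (a + t*c) / Real.exp (b + t*d)
      = Real.exp ((a - b) + t*(c - d)) := fun t => by rw [← Real.exp_sub]; ring_nf
  rw [funext he]
  apply Real.tendsto_exp_atBot.comp
  apply Filter.tendsto_atBot_add_const_left
  exact Filter.Tendsto.atTop_mul_const_of_neg (by linarith) Filter.tendsto_id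
lemma rOf_pos (u : Fin N → ℝ) (v : Fin N) : 0 < rOf u v := Real.exp_pos _

variable {p ξ : Fin N → ℝ}

lemma rAt (v : Fin N) (t : ℝ) : rOf (p + t • ξ) v = Real.exp (p v + t * ξ v) := by
  simp [rOf, smul_eq_mul]

lemma tendsto_ratio_of_lt (hlt : ξ i < ξ j) :
    Filter.Tendsto (fun t : ℝ => rOf (p + t • ξ) i / rOf (p + t • ξ) j)
      Filter.atTop (nhds 0) := by
  have he : ∀ t : ℝ, rOf (p + t • ξ) i / rOf (p + t • ξ) j
      = Real.exp (p i + t * ξ i) / Real.exp (p j + t * ξ j) := fun t => by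
    rw [rAt, rAt]
  rw [funext he]
  exact tendsto_exp_ratio hlt

lemma tendsto_cosAng_F1 (hIij : 0 ≤ I {i, j}) (hIik : 0 ≤ I {i, k}) (hIjk : 0 ≤ I {j, k})
    (hj : ξ i < ξ j) (hk : ξ i < ξ k) :
    Filter.Tendsto (fun t : ℝ => cosAng I (rOf (p + t • ξ)) i j k)
      Filter.atTop (nhds (-I {j, k})) := by
  set G : ℝ × ℝ → ℝ := fun q =>
    (2*q.1*q.2 + 2*I {i, j}*q.2 + 2*I {i, k}*q.1 - 2*I {j, k})
    / (2 * Real.sqrt (q.1^2 + 1 + 2*I {i, j}*q.1) * Real.sqrt (q.2^2 + 1 + 2*I {i, k}*q.2))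
    with hGdef
  have hG : ContinuousAt G (0, 0) := by
    apply ContinuousAt.div
    · fun_prop
    · fun_prop
    · norm_num
  have hx := tendsto_ratio_of_lt (p := p) hj
  have hy := tendsto_ratio_of_lt (p := p) hk
  have hcomp := hG.tendsto.comp (hx.prodMk_nhds hy)
  have hval : G (0, 0) = -I {j, k} := by
    show (2*0*0 + 2*I {i, j}*0 + 2*I {i, k}*0 - 2*I {j, k})
        / (2 * Real.sqrt ((0:ℝ)^2 + 1 + 2*I {i, j}*0) * Real.sqrt ((0:ℝ)^2 + 1 + 2*I {i, k}*0))
        = -I {j, k}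
    rw [show ((0:ℝ)^2 + 1 + 2*I {i, j}*0) = 1 by ring,
      show ((0:ℝ)^2 + 1 + 2*I {i, k}*0) = 1 by ring, Real.sqrt_one]
    ring
  rw [hval] at hcomp
  apply hcomp.congr
  intro t
  simp only [Function.comp_apply, hGdef]
  exact (cosAng_norm hIij hIik hIjk (rOf_pos _ i) (rOf_pos _ j) (rOf_pos _ k)).symm

lemma tendsto_cosAng_F2 (hIij : 0 ≤ I {i, j}) (hIik : 0 ≤ I {i, k}) (hIjk : 0 ≤ I {j, k})
    (hik : ξ k = ξ i) (hj : ξ i < ξ j) :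
    Filter.Tendsto (fun t : ℝ => cosAng I (rOf (p + t • ξ)) i j k)
      Filter.atTop (nhds ((I {i, j} * Real.exp (p i) - I {j, k} * Real.exp (p k))
        / Real.sqrt (Real.exp (p i)^2 + Real.exp (p k)^2
            + 2 * I {i, k} * Real.exp (p i) * Real.exp (p k)))) := by
  set A := Real.exp (p i) with hA
  set Bk := Real.exp (p k) with hB
  have hApos : 0 < A := Real.exp_pos _
  have hBpos : 0 < Bk := Real.exp_pos _
  set ρ : ℝ := A / Bk with hρ
  have hρpos : 0 < ρ := by positivity
  set G : ℝ × ℝ → ℝ := fun q =>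
    (2*q.1*q.2 + 2*I {i, j}*q.2 + 2*I {i, k}*q.1 - 2*I {j, k})
    / (2 * Real.sqrt (q.1^2 + 1 + 2*I {i, j}*q.1) * Real.sqrt (q.2^2 + 1 + 2*I {i, k}*q.2))
    with hGdef
  have harg : (0:ℝ) < ρ^2 + 1 + 2*I {i, k}*ρ := by nlinarith [mul_nonneg hIik hρpos.le]
  have hG : ContinuousAt G (0, ρ) := by
    apply ContinuousAt.div
    · fun_prop
    · fun_prop
    · show 2 * Real.sqrt ((0:ℝ)^2 + 1 + 2*I {i, j}*0) * Real.sqrt (ρ^2 + 1 + 2*I {i, k}*ρ) ≠ 0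
      have h1 : ((0:ℝ)^2 + 1 + 2*I {i, j}*0) = 1 := by ring
      rw [h1, Real.sqrt_one]
      have h2 : 0 < Real.sqrt (ρ^2 + 1 + 2*I {i, k}*ρ) := Real.sqrt_pos.2 harg
      positivity
  have hx := tendsto_ratio_of_lt (p := p) hj
  have hy : Filter.Tendsto (fun t : ℝ => rOf (p + t • ξ) i / rOf (p + t • ξ) k)
      Filter.atTop (nhds ρ) := by
    have he : ∀ t : ℝ, rOf (p + t • ξ) i / rOf (p + t • ξ) k = ρ := fun t => by
      rw [rAt, rAt, ← Real.exp_sub, hik, hρ, hA, hB, ← Real.exp_sub]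
      ring_nf
    rw [funext he]
    exact tendsto_const_nhds
  have hcomp := hG.tendsto.comp (hx.prodMk_nhds hy)
  have harg' : (0:ℝ) < A^2 + Bk^2 + 2*I {i, k}*A*Bk := by
    nlinarith [mul_nonneg (mul_nonneg hIik hApos.le) hBpos.le]
  have hval : G (0, ρ) = (I {i, j} * A - I {j, k} * Bk)
      / Real.sqrt (A^2 + Bk^2 + 2*I {i, k}*A*Bk) := by
    have hsq : Real.sqrt (ρ^2 + 1 + 2*I {i, k}*ρ)
        = Real.sqrt (A^2 + Bk^2 + 2*I {i, k}*A*Bk) / Bk := by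
      rw [show ρ^2 + 1 + 2*I {i, k}*ρ = (A^2 + Bk^2 + 2*I {i, k}*A*Bk) / Bk^2 by
          rw [hρ]; field_simp,
        Real.sqrt_div harg'.le, Real.sqrt_sq hBpos.le]
    have hsp : 0 < Real.sqrt (A^2 + Bk^2 + 2*I {i, k}*A*Bk) := Real.sqrt_pos.2 harg'
    show (2*0*ρ + 2*I {i, j}*ρ + 2*I {i, k}*0 - 2*I {j, k})
        / (2 * Real.sqrt ((0:ℝ)^2 + 1 + 2*I {i, j}*0) * Real.sqrt (ρ^2 + 1 + 2*I {i, k}*ρ)) = _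
    rw [show ((0:ℝ)^2 + 1 + 2*I {i, j}*0) = 1 by ring, Real.sqrt_one, hsq, hρ]
    field_simp
    ring
  rw [hval] at hcomp
  apply hcomp.congr
  intro t
  simp only [Function.comp_apply, hGdef]
  exact (cosAng_norm hIij hIik hIjk (rOf_pos _ i) (rOf_pos _ j) (rOf_pos _ k)).symm

lemma cosAng_const_of_eq (hij : ξ j = ξ i) (hik : ξ k = ξ i) (t : ℝ) :
    cosAng I (rOf (p + t • ξ)) i j k = cosAng I (rOf p) i j k := by
  apply cosAng_scale (Real.exp_pos (t * ξ i))
  · rw [rAt, rOf, ← Real.exp_add]; ring_nf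
  · rw [rAt, rOf, ← Real.exp_add, hij]; ring_nf
  · rw [rAt, rOf, ← Real.exp_add, hik]; ring_nf
/-- For a convex function on ℝ with a derivative at `0`, the graph lies above the
tangent line at `0`, evaluated at `1`. -/
lemma convexOn_tangent_le {g : ℝ → ℝ} (hg : ConvexOn ℝ Set.univ g) {g' : ℝ}
    (hd : HasDerivAt g g' 0) : g 0 + g' ≤ g 1 := by
  have hslope : Filter.Tendsto (slope g 0) (nhdsWithin 0 {(0:ℝ)}ᶜ) (nhds g') :=
    hasDerivAt_iff_tendsto_slope.1 hd
  have hsub : nhdsWithin (0:ℝ) (Set.Ioi 0) ≤ nhdsWithin (0:ℝ) {(0:ℝ)}ᶜ :=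
    nhdsWithin_mono 0 (fun x hx => ne_of_gt hx)
  have h2 : Filter.Tendsto (slope g 0) (nhdsWithin (0:ℝ) (Set.Ioi 0)) (nhds g') :=
    hslope.mono_left hsub
  have hle : g' ≤ g 1 - g 0 := by
    apply le_of_tendsto h2
    filter_upwards [Ioo_mem_nhdsGT_of_mem (Set.mem_Ico.2 ⟨le_refl (0:ℝ), one_pos⟩)] with s hs
    have := hg.secant_mono (Set.mem_univ 0) (Set.mem_univ s) (Set.mem_univ 1)
      hs.1.ne' one_ne_zero hs.2.le
    simpa [slope_def_field] using this
  linarith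
lemma fderiv_repr {F : (Fin N → ℝ) → ℝ} (hFC1 : ContDiff ℝ 1 F)
    {G : (Fin N → ℝ) → Fin N → ℝ}
    (hFgrad : ∀ u i, HasDerivAt (fun s => F (Function.update u i s)) (G u i) (u i))
    (u v : Fin N → ℝ) : fderiv ℝ F u v = ∑ i, v i * G u i := by
  have hdiff : HasFDerivAt F (fderiv ℝ F u) u :=
    ((hFC1.differentiable one_ne_zero) u).hasFDerivAt
  have hsingle : ∀ i, fderiv ℝ F u (Pi.single i 1) = G u i := by
    intro i
    have hupd : ∀ s : ℝ, Function.update u i s = u + (s - u i) • (Pi.single i 1 : Fin N → ℝ) := by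
      intro s; ext w
      by_cases hw : w = i
      · subst hw; simp
      · simp [Function.update_of_ne hw, Pi.single_eq_of_ne hw]
    have hline : HasDerivAt (fun s : ℝ => u + (s - u i) • (Pi.single i 1 : Fin N → ℝ))
        (Pi.single i 1) (u i) := by
      simpa using (((hasDerivAt_id (u i)).sub_const (u i)).smul_const
        ((Pi.single i 1 : Fin N → ℝ))).const_add u
    have hcomp : HasDerivAt (fun s : ℝ => F (u + (s - u i) • (Pi.single i 1 : Fin N → ℝ)))
        (fderiv ℝ F u (Pi.single i 1)) (u i) := by
      apply HasFDerivAt.comp_hasDerivAt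
      · show HasFDerivAt F (fderiv ℝ F u) (u + (u i - u i) • (Pi.single i 1 : Fin N → ℝ))
        simpa using hdiff
      · exact hline
    have := hFgrad u i
    rw [funext hupd] at this
    exact hcomp.unique this
  have hv : v = ∑ i, (v i) • (Pi.single i 1 : Fin N → ℝ) := by
    conv_lhs => rw [← Finset.univ_sum_single v]
    refine Finset.sum_congr rfl fun i _ => ?_
    rw [← Pi.single_smul, smul_eq_mul, mul_one]
  conv_lhs => rw [hv]
  rw [map_sum]
  exact Finset.sum_congr rfl fun i _ => by rw [map_smul, hsingle, smul_eq_mul]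

lemma convex_gradient_le {F : (Fin N → ℝ) → ℝ} (hFconv : ConvexOn ℝ Set.univ F)
    {Du : (Fin N → ℝ) →L[ℝ] ℝ} {u : Fin N → ℝ} (hdF : HasFDerivAt F Du u)
    (w : Fin N → ℝ) : F u + Du (w - u) ≤ F w := by
  set g : ℝ → ℝ := fun s => F (u + s • (w - u)) with hgdef
  have hline : HasDerivAt (fun s : ℝ => u + s • (w - u)) (w - u) 0 := by
    simpa using ((hasDerivAt_id (0:ℝ)).smul_const (w - u)).const_add u
  have hg : HasDerivAt g (Du (w - u)) 0 := by
    apply HasFDerivAt.comp_hasDerivAt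
    · show HasFDerivAt F Du (u + (0:ℝ) • (w - u))
      simpa using hdF
    · exact hline
  have hgc : ConvexOn ℝ Set.univ g := by
    refine ⟨convex_univ, fun x _ y _ a b ha hb hab => ?_⟩
    have hpt : u + (a * x + b * y) • (w - u)
        = a • (u + x • (w - u)) + b • (u + y • (w - u)) := by
      rw [show a • (u + x • (w - u)) + b • (u + y • (w - u))
        = (a + b) • u + (a * x + b * y) • (w - u) by module, hab, one_smul]
    calc g (a • x + b • y) = F (u + (a * x + b * y) • (w - u)) := by
          rw [hgdef]; norm_num
      _ = F (a • (u + x • (w - u)) + b • (u + y • (w - u))) := by rw [hpt]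
      _ ≤ a * F (u + x • (w - u)) + b * F (u + y • (w - u)) :=
          hFconv.2 (Set.mem_univ _) (Set.mem_univ _) ha hb hab
      _ = a • g x + b • g y := rfl
  have := convexOn_tangent_le hgc hg
  have hg0 : g 0 = F u := by rw [hgdef]; simp
  have hg1 : g 1 = F w := by rw [hgdef]; simp
  linarith
lemma walk_crossing {V : Type*} {G : SimpleGraph V} (P : V → Prop) :
    ∀ {x y : V}, G.Walk x y → P x → ¬P y → ∃ u v, G.Adj u v ∧ P u ∧ ¬P v := by
  intro x y w
  induction w with
  | nil => intro hx hy; exact absurd hx hy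
  | @cons a b c h q ih =>
    intro hx hy
    by_cases hb : P b
    · exact ih hb hy
    · exact ⟨a, b, h, hx, hb⟩

/-- From an edge one can extract a face containing it together with its third
vertex. -/
lemma edge_in_face (h3 : ∀ f ∈ Fc, f.card = 3) {u v : Fin N}
    (he : ({u, v} : Finset (Fin N)) ∈ edges Fc) (huv : u ≠ v) :
    ∃ z : Fin N, ({u, v, z} : Finset (Fin N)) ∈ Fc := by
  obtain ⟨f, hf, hmem⟩ := Finset.mem_biUnion.1 he
  obtain ⟨hsub, -⟩ := Finset.mem_powersetCard.1 hmem
  have hcard2 : ({u, v} : Finset (Fin N)).card = 2 := Finset.card_pair huv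
  have hdiff : (f \ ({u, v} : Finset (Fin N))).card = 1 := by
    rw [Finset.card_sdiff_of_subset hsub, h3 f hf, hcard2]
  obtain ⟨z, hz⟩ := Finset.card_eq_one.1 hdiff
  refine ⟨z, ?_⟩
  have hfeq : f = ({u, v, z} : Finset (Fin N)) := by
    have hzf : z ∈ f := by
      have : z ∈ f \ ({u, v} : Finset (Fin N)) := hz ▸ Finset.mem_singleton_self z
      exact (Finset.mem_sdiff.1 this).1
    apply Finset.Subset.antisymm
    · intro x hx
      simp only [Finset.mem_insert, Finset.mem_singleton]
      by_cases hx2 : x = u ∨ x = v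
      · tauto
      · have : x ∈ f \ ({u, v} : Finset (Fin N)) :=
          Finset.mem_sdiff.2 ⟨hx, by simp only [Finset.mem_insert, Finset.mem_singleton]; tauto⟩
        rw [hz] at this
        right; right; exact Finset.mem_singleton.1 this
    · intro x hx
      simp only [Finset.mem_insert, Finset.mem_singleton] at hx
      rcases hx with rfl | rfl | rfl
      · exact hsub (by simp)
      · exact hsub (by simp)
      · exact hzf
  rw [← hfeq]; exact hf
lemma triple_rev : ({i, j, k} : Finset (Fin N)) = {k, j, i} := by
  ext x; simp; tauto

lemma key_limit (hT : IsTriangulation Fc) (hI : ∀ e ∈ edges Fc, 0 ≤ I e)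
    (hp : rOf p ∈ Omega Fc I) (i₀ : Fin N)
    (hmin : ∀ v, ξ i₀ ≤ ξ v) (hproper : ∃ v, ξ i₀ ≠ ξ v) :
    ∃ L : ℝ,
      Filter.Tendsto (fun t : ℝ => ∑ i ∈ Finset.univ.filter (fun v => ξ v = ξ i₀),
          Kt Fc I (rOf (p + t • ξ)) i) Filter.atTop (nhds L) ∧
      L < ∑ i ∈ Finset.univ.filter (fun v => ξ v = ξ i₀), Kt Fc I (rOf p) i := by
  classical
  set μ := ξ i₀ with hμ
  set B : Finset (Fin N) := Finset.univ.filter (fun v => ξ v = μ) with hB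
  set T : Finset (Fin N × Fin N × Fin N) :=
    (B ×ˢ Finset.univ ×ˢ Finset.univ).filter
      (fun x => ({x.1, x.2.1, x.2.2} : Finset (Fin N)) ∈ Fc) with hTdef
  have hmemT : ∀ x ∈ T, ξ x.1 = μ ∧ ({x.1, x.2.1, x.2.2} : Finset (Fin N)) ∈ Fc := by
    intro x hx
    rw [hTdef, Finset.mem_filter] at hx
    refine ⟨?_, hx.2⟩
    have := hx.1
    rw [Finset.mem_product] at this
    have := this.1
    rw [hB, Finset.mem_filter] at this
    exact this.2
  -- the limit angle for the mixed case
  set c : Fin N → Fin N → Fin N → ℝ := fun v o w =>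
    (I {v, o} * Real.exp (p v) - I {o, w} * Real.exp (p w)) /
      Real.sqrt (Real.exp (p v)^2 + Real.exp (p w)^2
        + 2 * I {v, w} * Real.exp (p v) * Real.exp (p w)) with hcdef
  have hcneg : ∀ v o w : Fin N, c w o v = -(c v o w) := by
    intro v o w
    rw [hcdef]
    simp only
    rw [Finset.pair_comm w o, Finset.pair_comm o v, Finset.pair_comm w v,
      show Real.exp (p w)^2 + Real.exp (p v)^2
          + 2 * I {v, w} * Real.exp (p w) * Real.exp (p v)
        = Real.exp (p v)^2 + Real.exp (p w)^2
          + 2 * I {v, w} * Real.exp (p v) * Real.exp (p w) by ring, ← neg_div]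
    congr 1
    ring
  set ℓ : Fin N × Fin N × Fin N → ℝ := fun x =>
    if ξ x.2.1 = μ then
      (if ξ x.2.2 = μ then Lam (cosAng I (rOf p) x.1 x.2.1 x.2.2)
        else Lam (c x.1 x.2.2 x.2.1))
    else (if ξ x.2.2 = μ then Lam (c x.1 x.2.1 x.2.2)
      else π - Lam (I {x.2.1, x.2.2})) with hℓdef
  set τ : (Fin N × Fin N × Fin N) → ℝ :=
    fun x => Lam (cosAng I (rOf p) x.1 x.2.1 x.2.2) with hτdef
  -- rewriting the curvature sum as a sum over T
  have hKt : ∀ r : Fin N → ℝ, ∑ i ∈ B, Kt Fc I r i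
      = 2*π*(B.card : ℝ) - (1/2) * ∑ x ∈ T, Lam (cosAng I r x.1 x.2.1 x.2.2) := by
    intro r
    unfold Kt
    rw [Finset.sum_sub_distrib, Finset.sum_const, nsmul_eq_mul]
    congr 1
    · ring
    · rw [← Finset.mul_sum]
      congr 1
      conv_rhs => rw [hTdef, Finset.sum_filter, Finset.sum_product]
      refine Finset.sum_congr rfl fun i _ => ?_
      rw [Finset.sum_product]
  -- convergence of each term
  have hTend : ∀ x ∈ T, Filter.Tendsto
      (fun t : ℝ => Lam (cosAng I (rOf (p + t • ξ)) x.1 x.2.1 x.2.2))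
      Filter.atTop (nhds (ℓ x)) := by
    rintro ⟨i, j, k⟩ hx
    obtain ⟨hi, hface⟩ := hmemT _ hx
    obtain ⟨e1, e2, e3⟩ := face_edges hT.card3 hface
    have hIij := hI _ e1
    have hIik := hI _ e2
    have hIjk := hI _ e3
    simp only at hi hface hIij hIik hIjk ⊢
    rw [hℓdef]
    simp only
    by_cases hj : ξ j = μ <;> by_cases hk : ξ k = μ
    · rw [if_pos hj, if_pos hk]
      have heq : ∀ t : ℝ, cosAng I (rOf (p + t • ξ)) i j k = cosAng I (rOf p) i j k :=
        fun t => cosAng_const_of_eq (hj.trans hi.symm) (hk.trans hi.symm) t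
      rw [funext fun t => congrArg Lam (heq t)]
      exact tendsto_const_nhds
    · rw [if_pos hj, if_neg hk]
      have hik : ξ i < ξ k := by
        rw [hi]; exact lt_of_le_of_ne (hmin k) (fun h => hk h.symm)
      have hkj : ξ i = ξ j := hi.trans hj.symm
      have hF2 := tendsto_cosAng_F2 (p := p) (i := i) (j := k) (k := j)
        hIik hIij (by rw [Finset.pair_comm]; exact hIjk) hkj.symm hik
      have heq : ∀ t : ℝ, cosAng I (rOf (p + t • ξ)) i j k
          = cosAng I (rOf (p + t • ξ)) i k j := fun t => cosAng_symm
      rw [funext fun t => congrArg Lam (heq t)]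
      exact (continuous_Lam.tendsto _).comp hF2
    · rw [if_neg hj, if_pos hk]
      have hij : ξ i < ξ j := by
        rw [hi]; exact lt_of_le_of_ne (hmin j) (fun h => hj h.symm)
      have hF2 := tendsto_cosAng_F2 (p := p) (i := i) (j := j) (k := k)
        hIij hIik hIjk (hk.trans hi.symm) hij
      exact (continuous_Lam.tendsto _).comp hF2
    · rw [if_neg hj, if_neg hk]
      have hij : ξ i < ξ j := by
        rw [hi]; exact lt_of_le_of_ne (hmin j) (fun h => hj h.symm)
      have hik : ξ i < ξ k := by
        rw [hi]; exact lt_of_le_of_ne (hmin k) (fun h => hk h.symm)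
      have hF1 := tendsto_cosAng_F1 (p := p) hIij hIik hIjk hij hik
      rw [show π - Lam (I {j, k}) = Lam (-I {j, k}) by rw [Lam_neg']]
      exact (continuous_Lam.tendsto _).comp hF1
  -- the involution on mixed triples
  set σF : Fin N × Fin N × Fin N → Fin N × Fin N × Fin N :=
    fun x => if ξ x.2.1 = μ then (x.2.1, x.1, x.2.2) else (x.2.2, x.2.1, x.1) with hσdef
  set D : Fin N × Fin N × Fin N → ℝ := fun x => ℓ x - τ x with hDdef
  -- subdivision of T
  set T' : Finset (Fin N × Fin N × Fin N) :=
    T.filter (fun x => ¬(ξ x.2.1 = μ ∧ ξ x.2.2 = μ)) with hT'def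
  set S1 : Finset (Fin N × Fin N × Fin N) :=
    T'.filter (fun x => ξ x.2.1 ≠ μ ∧ ξ x.2.2 ≠ μ) with hS1def
  set S2 : Finset (Fin N × Fin N × Fin N) :=
    T'.filter (fun x => ¬(ξ x.2.1 ≠ μ ∧ ξ x.2.2 ≠ μ)) with hS2def
  have hS2char : ∀ x ∈ S2, x ∈ T ∧
      ((ξ x.2.1 = μ ∧ ξ x.2.2 ≠ μ) ∨ (ξ x.2.1 ≠ μ ∧ ξ x.2.2 = μ)) := by
    intro x hx
    rw [hS2def, Finset.mem_filter, hT'def, Finset.mem_filter] at hx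
    tauto
  have hS2mem : ∀ x, x ∈ T →
      ((ξ x.2.1 = μ ∧ ξ x.2.2 ≠ μ) ∨ (ξ x.2.1 ≠ μ ∧ ξ x.2.2 = μ)) → x ∈ S2 := by
    intro x hx h2
    rw [hS2def, Finset.mem_filter, hT'def, Finset.mem_filter]
    tauto
  have hσS2 : ∀ x ∈ S2, σF x ∈ S2 := by
    rintro ⟨i, j, k⟩ hx
    obtain ⟨hxT, hcase⟩ := hS2char _ hx
    obtain ⟨hi, hface⟩ := hmemT _ hxT
    simp only at hi hface hcase
    rcases hcase with ⟨hj, hk⟩ | ⟨hj, hk⟩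
    · have hσx : σF (i, j, k) = (j, i, k) := by rw [hσdef]; simp only; rw [if_pos hj]
      rw [hσx]
      apply hS2mem
      · rw [hTdef, Finset.mem_filter]
        constructor
        · rw [Finset.mem_product]
          exact ⟨by rw [hB]; simp [hj], by simp⟩
        · show ({j, i, k} : Finset (Fin N)) ∈ Fc
          rw [← triple_comm12]; exact hface
      · left; exact ⟨hi, hk⟩
    · have hσx : σF (i, j, k) = (k, j, i) := by rw [hσdef]; simp only; rw [if_neg hj]
      rw [hσx]
      apply hS2mem
      · rw [hTdef, Finset.mem_filter]
        constructor
        · rw [Finset.mem_product]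
          exact ⟨by rw [hB]; simp [hk], by simp⟩
        · show ({k, j, i} : Finset (Fin N)) ∈ Fc
          rw [← triple_rev]; exact hface
      · right; exact ⟨hj, hi⟩
  have hσσ : ∀ x ∈ S2, σF (σF x) = x := by
    rintro ⟨i, j, k⟩ hx
    obtain ⟨hxT, hcase⟩ := hS2char _ hx
    obtain ⟨hi, -⟩ := hmemT _ hxT
    simp only at hi hcase
    rcases hcase with ⟨hj, hk⟩ | ⟨hj, hk⟩
    · rw [hσdef]; simp only; rw [if_pos hj]; simp only; rw [if_pos hi]
    · rw [hσdef]; simp only; rw [if_neg hj]; simp only; rw [if_neg hj]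
  have hpair : ∀ x ∈ S2, 0 < D x + D (σF x) := by
    rintro ⟨i, j, k⟩ hx
    obtain ⟨hxT, hcase⟩ := hS2char _ hx
    obtain ⟨hi, hface⟩ := hmemT _ hxT
    simp only at hi hface hcase
    rcases hcase with ⟨hj, hk⟩ | ⟨hj, hk⟩
    · have hσx : σF (i, j, k) = (j, i, k) := by rw [hσdef]; simp only; rw [if_pos hj]
      have hl1 : ℓ (i, j, k) = Lam (c i k j) := by
        rw [hℓdef]; simp only; rw [if_pos hj, if_neg hk]
      have hl2 : ℓ (j, i, k) = Lam (c j k i) := by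
        rw [hℓdef]; simp only; rw [if_pos hi, if_neg hk]
      have hτlt : τ (i, j, k) + τ (j, i, k) < π := by
        rw [hτdef]; simp only
        exact Lam_cosAng_pair_lt_pi hT.card3 hI hp hface
      have hπ : ℓ (i, j, k) + ℓ (j, i, k) = π := by
        rw [hl1, hl2, hcneg i k j, Lam_neg']; ring
      rw [hDdef, hσx]
      simp only
      linarith
    · have hσx : σF (i, j, k) = (k, j, i) := by rw [hσdef]; simp only; rw [if_neg hj]
      have hl1 : ℓ (i, j, k) = Lam (c i j k) := by
        rw [hℓdef]; simp only; rw [if_neg hj, if_pos hk]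
      have hl2 : ℓ (k, j, i) = Lam (c k j i) := by
        rw [hℓdef]; simp only; rw [if_neg hj, if_pos hi]
      have hτlt : τ (i, j, k) + τ (k, j, i) < π := by
        rw [hτdef]; simp only
        rw [show cosAng I (rOf p) i j k = cosAng I (rOf p) i k j from cosAng_symm,
          show cosAng I (rOf p) k j i = cosAng I (rOf p) k i j from cosAng_symm]
        exact Lam_cosAng_pair_lt_pi hT.card3 hI hp (by rw [← triple_comm23]; exact hface)
      have hπ : ℓ (i, j, k) + ℓ (k, j, i) = π := by
        rw [hl1, hl2, hcneg i j k, Lam_neg']; ring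
      rw [hDdef, hσx]
      simp only
      linarith
  -- the crossing face supplies a strict term
  obtain ⟨v0, hv0⟩ := hproper
  obtain ⟨w⟩ := hT.conn.preconnected i₀ v0
  obtain ⟨u, v, hadj, hu, hv⟩ := walk_crossing (fun x => ξ x = μ) w hμ.symm
    (fun h => hv0 h.symm)
  rw [SimpleGraph.fromRel_adj] at hadj
  obtain ⟨hne, hrel⟩ := hadj
  have hedge : ({u, v} : Finset (Fin N)) ∈ edges Fc := by
    rcases hrel with h | h
    · exact h
    · rw [Finset.pair_comm]; exact h
  obtain ⟨z, hfz⟩ := edge_in_face hT.card3 hedge hne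
  have hxT : (u, v, z) ∈ T := by
    rw [hTdef, Finset.mem_filter]
    exact ⟨by rw [Finset.mem_product]; exact ⟨by rw [hB]; simp [hu], by simp⟩, hfz⟩
  -- positivity of the D-sum
  have hS1pos : ∀ x ∈ S1, 0 < D x := by
    rintro ⟨i, j, k⟩ hx
    rw [hS1def, Finset.mem_filter, hT'def, Finset.mem_filter] at hx
    obtain ⟨⟨hxT', -⟩, hj, hk⟩ := hx
    obtain ⟨hi, hface⟩ := hmemT _ hxT'
    simp only at hi hface hj hk
    have hb := Lam_cosAng_lt_pi_sub hT.card3 hI hp hface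
    have hl : ℓ (i, j, k) = π - Lam (I {j, k}) := by
      rw [hℓdef]; simp only; rw [if_neg hj, if_neg hk]
    rw [hDdef]; simp only
    rw [hl, hτdef]
    simp only
    linarith
  have hsum2 : ∑ x ∈ S2, D (σF x) = ∑ x ∈ S2, D x := by
    apply Finset.sum_nbij' σF σF hσS2 hσS2 hσσ hσσ
    intro x hx
    rfl
  have h2S2 : ∑ x ∈ S2, D x + ∑ x ∈ S2, D x = ∑ x ∈ S2, (D x + D (σF x)) := by
    rw [Finset.sum_add_distrib, hsum2]
  have hS2nonneg : 0 ≤ ∑ x ∈ S2, D x := by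
    have h := Finset.sum_nonneg (fun x hx => (hpair x hx).le)
    linarith
  have hS1nonneg : 0 ≤ ∑ x ∈ S1, D x :=
    Finset.sum_nonneg (fun x hx => (hS1pos x hx).le)
  have hzero3 : ∑ x ∈ T.filter (fun x => ξ x.2.1 = μ ∧ ξ x.2.2 = μ), D x = 0 := by
    apply Finset.sum_eq_zero
    rintro ⟨i, j, k⟩ hx
    rw [Finset.mem_filter] at hx
    obtain ⟨hxT', hj, hk⟩ := hx
    rw [hDdef, hℓdef, hτdef]
    simp only at hj hk ⊢
    rw [if_pos hj, if_pos hk, sub_self]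
  have hsplit : ∑ x ∈ T, D x = ∑ x ∈ T.filter (fun x => ξ x.2.1 = μ ∧ ξ x.2.2 = μ), D x
      + (∑ x ∈ S1, D x + ∑ x ∈ S2, D x) := by
    rw [hS1def, hS2def, Finset.sum_filter_add_sum_filter_not T', hT'def,
      Finset.sum_filter_add_sum_filter_not T]
  have hDpos : 0 < ∑ x ∈ T, D x := by
    by_cases hz : ξ z = μ
    · have hmemS2 : (u, v, z) ∈ S2 := hS2mem _ hxT (Or.inr ⟨hv, hz⟩)
      have hposS2 : 0 < ∑ x ∈ S2, (D x + D (σF x)) :=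
        Finset.sum_pos hpair ⟨_, hmemS2⟩
      rw [hsplit, hzero3]
      linarith
    · have hmemS1 : (u, v, z) ∈ S1 := by
        rw [hS1def, Finset.mem_filter, hT'def, Finset.mem_filter]
        exact ⟨⟨hxT, by simp only; tauto⟩, by simp only; exact ⟨hv, hz⟩⟩
      have hposS1 : 0 < ∑ x ∈ S1, D x :=
        Finset.sum_pos' (fun x hx => (hS1pos x hx).le) ⟨_, hmemS1, hS1pos _ hmemS1⟩
      rw [hsplit, hzero3]
      linarith
  -- conclusion
  refine ⟨2*π*(B.card : ℝ) - (1/2) * ∑ x ∈ T, ℓ x, ?_, ?_⟩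
  · have hsum := tendsto_finset_sum T hTend
    have htot := (tendsto_const_nhds (α := ℝ) (f := Filter.atTop)
      (x := 2*π*(B.card : ℝ))).sub (hsum.const_mul (1/2 : ℝ))
    apply htot.congr
    intro t
    exact (hKt (rOf (p + t • ξ))).symm
  · rw [hKt (rOf p)]
    have hDsum : ∑ x ∈ T, D x = ∑ x ∈ T, ℓ x - ∑ x ∈ T, τ x := by
      rw [hDdef, Finset.sum_sub_distrib]
    have : ∑ x ∈ T, τ x = ∑ x ∈ T, Lam (cosAng I (rOf p) x.1 x.2.1 x.2.2) := rfl
    linarith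
/-- with αχ(M) ≤ 0, p ∈ ln Ω ∩ {Σu_i = 0} a constant α-curvature
point, and F̃ any convex C¹ function on ℝ^N with ∂F̃/∂u_i = K̃_i − s_α r_i^α,
the function F̃ is proper on the hyperplane 𝒰 = {Σu_i = 0}: F̃(u) → +∞ as
‖u‖ → ∞ with u ∈ 𝒰. -/
theorem stmt19 {N : ℕ} (Fc : Finset (Finset (Fin N))) (hT : IsTriangulation Fc)
    (I : Finset (Fin N) → ℝ) (hI : ∀ e ∈ edges Fc, 0 ≤ I e) (α : ℝ)
    (hαχ : α * (chi Fc : ℝ) ≤ 0)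
    (p : Fin N → ℝ) (hp : p ∈ lnOmega Fc I) (hpsum : ∑ i, p i = 0)
    (hconst : ∀ i : Fin N,
      K Fc I (rOf p) i = sA Fc α (rOf p) * rOf p i ^ α)
    (F : (Fin N → ℝ) → ℝ) (hFconv : ConvexOn ℝ Set.univ F) (hFC1 : ContDiff ℝ 1 F)
    (hFgrad : ∀ u : Fin N → ℝ, ∀ i : Fin N,
      HasDerivAt (fun s : ℝ => F (Function.update u i s)) (extGrad Fc I α u i) (u i)) :
    ∀ M : ℝ, ∃ R : ℝ, ∀ u : Fin N → ℝ, (∑ i, u i) = 0 → R < ‖u‖ → M < F u := by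
  classical
  intro M
  by_contra hcon
  push_neg at hcon
  haveI hNne : Nonempty (Fin N) := hT.conn.nonempty
  have hΩ : rOf p ∈ Omega Fc I := hp
  -- the gradient vanishes at p
  have hgrad0 : ∀ i, extGrad Fc I α p i = 0 := by
    intro i
    unfold extGrad
    rw [Kt_eq_K hT.card3 hI hΩ, hconst i, sub_self]
  -- p is a global minimum of F
  have hdF : ∀ u : Fin N → ℝ, HasFDerivAt F (fderiv ℝ F u) u :=
    fun u => ((hFC1.differentiable one_ne_zero) u).hasFDerivAt
  have hfd : ∀ u v : Fin N → ℝ, fderiv ℝ F u v = ∑ i, v i * extGrad Fc I α u i :=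
    fderiv_repr hFC1 hFgrad
  have hminF : ∀ w, F p ≤ F w := by
    intro w
    have h := convex_gradient_le hFconv (hdF p) w
    rw [hfd p (w - p)] at h
    simp only [hgrad0, mul_zero, Finset.sum_const_zero, add_zero] at h
    exact h
  -- extract a diverging sequence with F ≤ M and normalize
  choose u hu1 hu2 hu3 using hcon
  have hupos : ∀ n : ℕ, 0 < ‖u (n : ℝ)‖ :=
    fun n => lt_of_le_of_lt (Nat.cast_nonneg n) (hu2 (n : ℝ))
  set ξn : ℕ → (Fin N → ℝ) := fun n => ‖u (n : ℝ)‖⁻¹ • u (n : ℝ) with hξndef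
  have hξnmem : ∀ n, ξn n ∈ Metric.sphere (0 : Fin N → ℝ) 1 := by
    intro n
    rw [mem_sphere_zero_iff_norm, hξndef]
    simp only [norm_smul, norm_inv, norm_norm]
    exact inv_mul_cancel₀ (hupos n).ne'
  obtain ⟨ξ, hξsph, φ, hφmono, hφtend⟩ :=
    (isCompact_sphere (0 : Fin N → ℝ) 1).tendsto_subseq hξnmem
  have hξnorm : ‖ξ‖ = 1 := mem_sphere_zero_iff_norm.1 hξsph
  have hφn : ∀ n : ℕ, (n : ℝ) ≤ ‖u ((φ n : ℕ) : ℝ)‖ := by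
    intro n
    calc (n : ℝ) ≤ (φ n : ℝ) := by exact_mod_cast hφmono.le_apply
      _ ≤ ‖u ((φ n : ℕ) : ℝ)‖ := (hu2 _).le
  have hnorminf : Filter.Tendsto (fun n : ℕ => ‖u ((φ n : ℕ) : ℝ)‖)
      Filter.atTop Filter.atTop :=
    Filter.tendsto_atTop_mono hφn tendsto_natCast_atTop_atTop
  have hinv0 : Filter.Tendsto (fun n : ℕ => ‖u ((φ n : ℕ) : ℝ)‖⁻¹)
      Filter.atTop (nhds 0) := hnorminf.inv_tendsto_atTop
  -- the direction sums to zero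
  have hξsum : ∑ i, ξ i = 0 := by
    have hS : Continuous (fun w : Fin N → ℝ => ∑ i, w i) :=
      continuous_finset_sum _ (fun i _ => continuous_apply i)
    have h1 : Filter.Tendsto (fun n : ℕ => ∑ i, (ξn (φ n)) i)
        Filter.atTop (nhds (∑ i, ξ i)) := (hS.tendsto ξ).comp hφtend
    have h2 : ∀ n : ℕ, ∑ i, (ξn (φ n)) i = 0 := by
      intro n
      rw [hξndef]
      simp only [Pi.smul_apply, smul_eq_mul, ← Finset.mul_sum]
      rw [hu1]
      ring
    rw [funext h2] at h1
    exact (tendsto_nhds_unique tendsto_const_nhds h1).symm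
  -- F is bounded on the ray p + t ξ, t ≥ 0
  have hray : ∀ t : ℝ, 0 ≤ t → F (p + t • ξ) ≤ max (F p) M := by
    intro t ht
    set y : ℕ → (Fin N → ℝ) :=
      fun n => p + t • (‖u ((φ n : ℕ) : ℝ)‖⁻¹ • (u ((φ n : ℕ) : ℝ) - p)) with hydef
    have hytend : Filter.Tendsto y Filter.atTop (nhds (p + t • ξ)) := by
      have hin : Filter.Tendsto (fun n : ℕ => ‖u ((φ n : ℕ) : ℝ)‖⁻¹ • (u ((φ n : ℕ) : ℝ) - p))
          Filter.atTop (nhds ξ) := by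
        have he : ∀ n : ℕ, ‖u ((φ n : ℕ) : ℝ)‖⁻¹ • (u ((φ n : ℕ) : ℝ) - p)
            = ξn (φ n) - ‖u ((φ n : ℕ) : ℝ)‖⁻¹ • p := by
          intro n
          rw [smul_sub, hξndef]
        rw [funext he]
        have := hφtend.sub (hinv0.smul_const p)
        simpa using this
      have := (hin.const_smul t).const_add p
      exact this
    have hyle : ∀ᶠ n : ℕ in Filter.atTop, F (y n) ≤ max (F p) M := by
      filter_upwards [Filter.eventually_ge_atTop (Nat.ceil t)] with n hn
      set lam : ℝ := t * ‖u ((φ n : ℕ) : ℝ)‖⁻¹ with hlamdef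
      have hnormpos : 0 < ‖u ((φ n : ℕ) : ℝ)‖ := hupos _
      have htn : t ≤ ‖u ((φ n : ℕ) : ℝ)‖ :=
        le_trans (Nat.le_ceil t) (le_trans (by exact_mod_cast hn) (hφn n))
      have hlam0 : 0 ≤ lam := by positivity
      have hlam1 : lam ≤ 1 := by
        rw [hlamdef, ← div_eq_mul_inv, div_le_one hnormpos]
        exact htn
      have hyeq : y n = (1 - lam) • p + lam • u ((φ n : ℕ) : ℝ) := by
        rw [hydef, hlamdef]
        simp only
        rw [smul_smul]
        module
      rw [hyeq]
      have := hFconv.2 (Set.mem_univ p) (Set.mem_univ (u ((φ n : ℕ) : ℝ)))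
        (by linarith : (0:ℝ) ≤ 1 - lam) hlam0 (by ring)
      have hFu : F (u ((φ n : ℕ) : ℝ)) ≤ max (F p) M :=
        le_trans (hu3 _) (le_max_right _ _)
      have hFp : F p ≤ max (F p) M := le_max_left _ _
      calc F ((1 - lam) • p + lam • u ((φ n : ℕ) : ℝ))
          ≤ (1 - lam) * F p + lam * F (u ((φ n : ℕ) : ℝ)) := this
        _ ≤ (1 - lam) * max (F p) M + lam * max (F p) M := by
            apply add_le_add
            · exact mul_le_mul_of_nonneg_left hFp (by linarith)
            · exact mul_le_mul_of_nonneg_left hFu hlam0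
        _ = max (F p) M := by ring
    exact le_of_tendsto ((hFC1.continuous.tendsto _).comp hytend) hyle
  -- F is constant along the ray
  have hconstray : ∀ t : ℝ, 0 ≤ t → F (p + t • ξ) = F p := by
    intro t ht
    refine le_antisymm ?_ (hminF _)
    have hTlim : Filter.Tendsto
        (fun T : ℝ => (1 - t/T) * F p + (t/T) * max (F p) M)
        Filter.atTop (nhds ((1 - 0) * F p + 0 * max (F p) M)) := by
      have h0 : Filter.Tendsto (fun T : ℝ => t/T) Filter.atTop (nhds 0) :=
        tendsto_const_nhds.div_atTop Filter.tendsto_id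
      exact ((tendsto_const_nhds.sub h0).mul tendsto_const_nhds).add
        (h0.mul tendsto_const_nhds)
    have hev : ∀ᶠ T : ℝ in Filter.atTop,
        F (p + t • ξ) ≤ (1 - t/T) * F p + (t/T) * max (F p) M := by
      filter_upwards [Filter.eventually_ge_atTop (max t 1)] with T hT
      have hT1 : (0:ℝ) < T := lt_of_lt_of_le one_pos (le_trans (le_max_right t 1) hT)
      have htT : t ≤ T := le_trans (le_max_left t 1) hT
      have hs0 : 0 ≤ t/T := by positivity
      have hs1 : t/T ≤ 1 := by rw [div_le_one hT1]; exact htT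
      have hpt : p + t • ξ = (1 - t/T) • p + (t/T) • (p + T • ξ) := by
        have : (t/T) * T = t := by field_simp
        rw [smul_add, smul_smul, this]
        module
      rw [hpt]
      calc F ((1 - t/T) • p + (t/T) • (p + T • ξ))
          ≤ (1 - t/T) * F p + (t/T) * F (p + T • ξ) :=
            hFconv.2 (Set.mem_univ _) (Set.mem_univ _) (by linarith) hs0 (by ring)
        _ ≤ (1 - t/T) * F p + (t/T) * max (F p) M := by
            apply add_le_add_right
            exact mul_le_mul_of_nonneg_left (hray T hT1.le) hs0
    have := ge_of_tendsto hTlim hev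
    simpa using this
  -- the extended gradient vanishes along the ray
  have hzero : ∀ t : ℝ, 0 ≤ t → ∀ i, extGrad Fc I α (p + t • ξ) i = 0 := by
    intro t ht i
    have hlocal : IsLocalMin (fun s => F (Function.update (p + t • ξ) i s))
        ((p + t • ξ) i) := by
      apply Filter.Eventually.of_forall
      intro s
      simp only
      rw [Function.update_eq_self, hconstray t ht]
      exact hminF _
    exact hlocal.hasDerivAt_eq_zero (hFgrad _ i)
  -- choose the minimising direction
  obtain ⟨i₀, -, hmin₀⟩ := Finset.exists_min_image Finset.univ ξ Finset.univ_nonempty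
  have hminξ : ∀ v, ξ i₀ ≤ ξ v := fun v => hmin₀ v (Finset.mem_univ v)
  have hNpos : 0 < (N : ℝ) := by
    have : 0 < N := Fin.pos_iff_nonempty.2 hNne
    exact_mod_cast this
  have hproper : ∃ v, ξ i₀ ≠ ξ v := by
    by_contra hall
    push_neg at hall
    have hsum : ∑ i, ξ i = (N : ℝ) * ξ i₀ := by
      rw [Finset.sum_congr rfl (fun i _ => (hall i).symm), Finset.sum_const,
        Finset.card_univ, Fintype.card_fin, nsmul_eq_mul]
    rw [hξsum] at hsum
    have hzero' : ξ i₀ = 0 := by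
      by_contra h0
      exact h0 (by nlinarith)
    have : ξ = 0 := funext fun v => by rw [← hall v, hzero']; rfl
    rw [this] at hξnorm
    simp at hξnorm
  obtain ⟨L, hLten, hLlt⟩ := key_limit hT hI hΩ i₀ hminξ hproper
  set B : Finset (Fin N) := Finset.univ.filter (fun v => ξ v = ξ i₀) with hBdef
  have hi₀B : i₀ ∈ B := by rw [hBdef]; simp
  have hrpos : ∀ (w : Fin N → ℝ) (v : Fin N), 0 < rOf w v ^ α :=
    fun w v => Real.rpow_pos_of_pos (rOf_pos w v) α
  have hDpos : ∀ w : Fin N → ℝ, 0 < ∑ j, rOf w j ^ α :=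
    fun w => Finset.sum_pos (fun j _ => hrpos w j) Finset.univ_nonempty
  set ρ : ℝ → ℝ := fun t =>
    (∑ i ∈ B, rOf (p + t • ξ) i ^ α) / (∑ j, rOf (p + t • ξ) j ^ α) with hρdef
  have hΦρ : ∀ t : ℝ, 0 ≤ t → ∑ i ∈ B, Kt Fc I (rOf (p + t • ξ)) i
      = 2*π*(chi Fc : ℝ) * ρ t := by
    intro t ht
    have hKts : ∀ i, Kt Fc I (rOf (p + t • ξ)) i
        = sA Fc α (rOf (p + t • ξ)) * rOf (p + t • ξ) i ^ α := by
      intro i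
      have h := hzero t ht i
      unfold extGrad at h
      linarith
    rw [Finset.sum_congr rfl (fun i _ => hKts i), ← Finset.mul_sum]
    unfold sA
    rw [hρdef]
    rw [div_mul_eq_mul_div, mul_div_assoc]
  have hp0 : p + (0:ℝ) • ξ = p := by simp
  have hΦ0 : ∑ i ∈ B, Kt Fc I (rOf p) i = 2*π*(chi Fc : ℝ) * ρ 0 := by
    have h := hΦρ 0 le_rfl
    rw [hp0] at h
    exact h
  have hρ0pos : 0 < ρ 0 := by
    rw [hρdef]
    exact div_pos (Finset.sum_pos (fun i _ => hrpos _ i) ⟨i₀, hi₀B⟩) (hDpos _)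
  have hρ0le : ρ 0 ≤ 1 := by
    rw [hρdef, div_le_one (hDpos _)]
    exact Finset.sum_le_sum_of_subset_of_nonneg (Finset.filter_subset _ _)
      (fun j _ _ => (hrpos _ j).le)
  have hEqF : (fun t : ℝ => ∑ i ∈ B, Kt Fc I (rOf (p + t • ξ)) i)
      =ᶠ[Filter.atTop] (fun t => 2*π*(chi Fc : ℝ) * ρ t) := by
    filter_upwards [Filter.eventually_ge_atTop 0] with t ht using hΦρ t ht
  have hρLten : Filter.Tendsto (fun t => 2*π*(chi Fc : ℝ) * ρ t)
      Filter.atTop (nhds L) := hLten.congr' hEqF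
  rw [hΦ0] at hLlt
  have hrexp : ∀ (w : Fin N → ℝ) (v : Fin N), rOf w v ^ α = Real.exp (w v * α) := by
    intro w v
    rw [rOf]
    rw [Real.rpow_def_of_pos (Real.exp_pos _), Real.log_exp]
  have hratio : ∀ (a b : Fin N), ξ a * α < ξ b * α →
      Filter.Tendsto (fun t : ℝ => rOf (p + t • ξ) a ^ α / rOf (p + t • ξ) b ^ α)
        Filter.atTop (nhds 0) := by
    intro a b hab
    have he : ∀ t : ℝ, rOf (p + t • ξ) a ^ α / rOf (p + t • ξ) b ^ α
        = Real.exp (p a * α + t * (ξ a * α)) / Real.exp (p b * α + t * (ξ b * α)) := by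
      intro t
      rw [hrexp, hrexp]
      simp only [Pi.add_apply, Pi.smul_apply, smul_eq_mul]
      ring_nf
    rw [funext he]
    exact tendsto_exp_ratio hab
  rcases lt_trichotomy α 0 with hα | hα | hα
  · -- α < 0, so χ ≥ 0 and ρ → 1
    have hχ : (0:ℝ) ≤ (chi Fc : ℝ) := by nlinarith
    set Bc : Finset (Fin N) := Finset.univ.filter (fun v => ¬ ξ v = ξ i₀) with hBcdef
    have hEten : Filter.Tendsto
        (fun t : ℝ => ∑ j ∈ Bc, rOf (p + t • ξ) j ^ α / rOf (p + t • ξ) i₀ ^ α)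
        Filter.atTop (nhds 0) := by
      have h := tendsto_finset_sum Bc (f := fun j (t : ℝ) =>
          rOf (p + t • ξ) j ^ α / rOf (p + t • ξ) i₀ ^ α) (a := fun _ => 0)
        (fun j hj => by
          apply hratio
          have hj' : ξ i₀ < ξ j := by
            rw [hBcdef, Finset.mem_filter] at hj
            exact lt_of_le_of_ne (hminξ j) (fun h => hj.2 h.symm)
          exact mul_lt_mul_of_neg_right hj' hα)
      simpa using h
    have hlow : ∀ t : ℝ, 1 - ∑ j ∈ Bc, rOf (p + t • ξ) j ^ α / rOf (p + t • ξ) i₀ ^ α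
        ≤ ρ t := by
      intro t
      set Nm := ∑ i ∈ B, rOf (p + t • ξ) i ^ α with hNm
      set Rest := ∑ j ∈ Bc, rOf (p + t • ξ) j ^ α with hRest
      have hsplitD : Nm + Rest = ∑ j, rOf (p + t • ξ) j ^ α := by
        rw [hNm, hRest, hBdef, hBcdef]
        exact Finset.sum_filter_add_sum_filter_not _ _ _
      have hNmpos : 0 < Nm := Finset.sum_pos (fun i _ => hrpos _ i) ⟨i₀, hi₀B⟩
      have hRestnn : 0 ≤ Rest := Finset.sum_nonneg (fun j _ => (hrpos _ j).le)
      have hipos : 0 < rOf (p + t • ξ) i₀ ^ α := hrpos _ i₀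
      have hile : rOf (p + t • ξ) i₀ ^ α ≤ Nm + Rest := by
        rw [hsplitD]
        exact Finset.single_le_sum (fun j _ => (hrpos _ j).le) (Finset.mem_univ i₀)
      have hρeq : ρ t = 1 - Rest / (Nm + Rest) := by
        rw [hρdef]
        simp only
        rw [← hsplitD, ← hNm, eq_sub_iff_add_eq, ← add_div, div_self (by linarith)]
      have hdivle : Rest / (Nm + Rest) ≤ Rest / rOf (p + t • ξ) i₀ ^ α :=
        div_le_div_of_nonneg_left hRestnn hipos hile
      rw [hρeq, ← Finset.sum_div, ← hRest]
      linarith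
    have hρ1 : Filter.Tendsto ρ Filter.atTop (nhds 1) := by
      apply tendsto_of_tendsto_of_tendsto_of_le_of_le
        (g := fun t : ℝ => 1 - ∑ j ∈ Bc, rOf (p + t • ξ) j ^ α / rOf (p + t • ξ) i₀ ^ α)
        (h := fun _ : ℝ => (1:ℝ))
      · simpa using tendsto_const_nhds.sub hEten
      · exact tendsto_const_nhds
      · exact hlow
      · intro t
        rw [hρdef, div_le_one (hDpos _)]
        exact Finset.sum_le_sum_of_subset_of_nonneg (Finset.filter_subset _ _)
          (fun j _ _ => (hrpos _ j).le)
    have hLeq : L = 2*π*(chi Fc : ℝ) := by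
      have h := hρ1.const_mul (2*π*(chi Fc : ℝ))
      rw [mul_one] at h
      exact tendsto_nhds_unique hρLten h
    nlinarith [mul_nonneg (mul_nonneg (by positivity : (0:ℝ) ≤ 2*π) hχ)
      (by linarith : (0:ℝ) ≤ 1 - ρ 0), Real.pi_pos]
  · -- α = 0 : ρ is constant
    have hρc : ∀ t, ρ t = ρ 0 := by
      intro t
      rw [hρdef]
      simp only [hα, Real.rpow_zero]
    have hLeq : L = 2*π*(chi Fc : ℝ) * ρ 0 := by
      apply tendsto_nhds_unique hρLten
      rw [show (fun t => 2*π*(chi Fc : ℝ) * ρ t) = (fun _ : ℝ => 2*π*(chi Fc : ℝ) * ρ 0)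
        from funext (fun t => by rw [hρc t])]
      exact tendsto_const_nhds
    linarith
  · -- α > 0 : χ ≤ 0 and ρ → 0
    have hχ : (chi Fc : ℝ) ≤ 0 := by nlinarith
    obtain ⟨v0, hv0⟩ := hproper
    have hEten : Filter.Tendsto
        (fun t : ℝ => ∑ i ∈ B, rOf (p + t • ξ) i ^ α / rOf (p + t • ξ) v0 ^ α)
        Filter.atTop (nhds 0) := by
      have h := tendsto_finset_sum B (f := fun i (t : ℝ) =>
          rOf (p + t • ξ) i ^ α / rOf (p + t • ξ) v0 ^ α) (a := fun _ => 0)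
        (fun i hi => by
          apply hratio
          have hiB : ξ i = ξ i₀ := by
            rw [hBdef, Finset.mem_filter] at hi
            exact hi.2
          have hlt : ξ i < ξ v0 := by
            rw [hiB]
            exact lt_of_le_of_ne (hminξ v0) hv0
          exact mul_lt_mul_of_pos_right hlt hα)
      simpa using h
    have hρ0' : Filter.Tendsto ρ Filter.atTop (nhds 0) := by
      apply tendsto_of_tendsto_of_tendsto_of_le_of_le
        (g := fun _ : ℝ => (0:ℝ))
        (h := fun t : ℝ => ∑ i ∈ B, rOf (p + t • ξ) i ^ α / rOf (p + t • ξ) v0 ^ α)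
      · exact tendsto_const_nhds
      · exact hEten
      · intro t
        simp only [hρdef]
        exact div_nonneg (Finset.sum_nonneg fun i _ => (hrpos _ i).le) (hDpos _).le
      · intro t
        simp only [hρdef]
        rw [← Finset.sum_div]
        apply div_le_div_of_nonneg_left (Finset.sum_nonneg (fun i _ => (hrpos _ i).le))
          (hrpos _ v0)
        exact Finset.single_le_sum (fun j _ => (hrpos _ j).le) (Finset.mem_univ v0)
    have hLeq : L = 0 := by
      have h := hρ0'.const_mul (2*π*(chi Fc : ℝ))
      rw [mul_zero] at h
      exact tendsto_nhds_unique hρLten h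
    nlinarith [mul_nonneg (mul_nonneg (by positivity : (0:ℝ) ≤ 2*π) (neg_nonneg.2 hχ))
      hρ0pos.le, Real.pi_pos]
end IDCP
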